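/- The cube root of the independence number of the third strong power of the 15-cycle exceeds 7.2495: (α(C_15^3) : ℝ)^(1/3) ≥ 381^(1/3) > 7.2495. In particular, the Shannon capacity of C_15, defined as sup over d ≥ 1 of α(C_15^d)^(1/d), is greater than 7.2495. -/

import Mathlib

/-- Circular distance between two elements of `ZMod p`, computed via representatives
in `{0, …, p−1}`: `min (|x − y|) (p − |x − y|)`. -/
def circDist (p : ℕ) (x y : ZMod p) : ℕ :=
  min ((x.val : ℤ) - (y.val : ℤ)).natAbs (p - ((x.val : ℤ) - (y.val : ℤ)).natAbs)

lemma circDist_comm (p : ℕ) (x y : ZMod p) : circDist p x y = circDist p y x := by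
  unfold circDist
  rw [show ((x.val : ℤ) - y.val).natAbs = ((y.val : ℤ) - x.val).natAbs by omega]

/-- The `d`-th strong power of the cycle `C_p`: vertices are vectors in `(ZMod p)^d`,
and distinct vertices are adjacent iff every coordinate has circular distance at most 1. -/
def cyclePow (p d : ℕ) : SimpleGraph (Fin d → ZMod p) where
  Adj u v := u ≠ v ∧ ∀ i, circDist p (u i) (v i) ≤ 1
  symm := ⟨by
    intro u v ⟨h1, h2⟩
    exact ⟨h1.symm, fun i => (circDist_comm p (v i) (u i)) ▸ h2 i⟩⟩
  loopless := ⟨fun v h => h.1 rfl⟩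

/-- The independence number of a graph: the largest size of a finite set of
pairwise non-adjacent vertices. -/
noncomputable def indepNum {V : Type*} (G : SimpleGraph V) : ℕ :=
  sSup {n | ∃ s : Finset V, (∀ u ∈ s, ∀ v ∈ s, u ≠ v → ¬ G.Adj u v) ∧ s.card = n}

/-- The Shannon capacity of the cycle `C_p`: the supremum over `d ≥ 1` of
`α(C_p^d)^(1/d)`, powers taken with respect to the strong product. -/
noncomputable def shannonCapacity (p : ℕ) : ℝ :=
  ⨆ d : {n : ℕ // 0 < n}, (indepNum (cyclePow p d) : ℝ) ^ (((d : ℕ) : ℝ))⁻¹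

/-!
The lower bound on `α(C₁₅³)` is witnessed by an explicit independent set: the union of the
orbits of 127 points under the translation by `(5, 5, 0)`, whose pairwise non-adjacency the
kernel checks on representatives in `{0, …, 14}`. Since `α(C_p^d) ≤ p^d`, the terms
`α(C_p^d)^(1/d)` are bounded by `p`, so the supremum defining the capacity dominates the term
for `d = 3`; finally `7.2495³ < 381`.
-/

section IndepNum

variable {V : Type*} [Fintype V] (G : SimpleGraph V)

lemma bddAbove_indepSizes :
    BddAbove {n | ∃ s : Finset V, (∀ u ∈ s, ∀ v ∈ s, u ≠ v → ¬ G.Adj u v) ∧ s.card = n} := by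
  refine ⟨Fintype.card V, ?_⟩
  rintro n ⟨s, -, rfl⟩
  exact s.card_le_univ

lemma indepNum_le_card : indepNum G ≤ Fintype.card V :=
  csSup_le ⟨0, ∅, by simp, rfl⟩ fun _ ⟨s, _, hs⟩ => hs ▸ s.card_le_univ

lemma le_indepNum_of_pairwise {l : List V} (hl : l.Pairwise fun u v => u ≠ v ∧ ¬ G.Adj u v) :
    l.length ≤ indepNum G := by
  classical
  have hnodup : l.Nodup := hl.imp And.left
  refine le_csSup (bddAbove_indepSizes G) ⟨l.toFinset, ?_, List.toFinset_card_of_nodup hnodup⟩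
  intro u hu v hv huv
  have : Std.Symm fun u v => ¬ G.Adj u v := ⟨fun _ _ h hadj => h hadj.symm⟩
  exact (hl.imp And.right).forall (List.mem_toFinset.1 hu) (List.mem_toFinset.1 hv) huv

end IndepNum

section CyclePow

variable {p : ℕ}

lemma indepNum_cyclePow_le_pow [NeZero p] (d : ℕ) : indepNum (cyclePow p d) ≤ p ^ d := by
  simpa using indepNum_le_card (cyclePow p d)

lemma indepNum_cyclePow_rpow_inv_le [NeZero p] {d : ℕ} (hd : 0 < d) :
    (indepNum (cyclePow p d) : ℝ) ^ (d : ℝ)⁻¹ ≤ p := by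
  have hα : (indepNum (cyclePow p d) : ℝ) ≤ (p : ℝ) ^ (d : ℝ) := by
    exact_mod_cast indepNum_cyclePow_le_pow d
  calc (indepNum (cyclePow p d) : ℝ) ^ (d : ℝ)⁻¹ ≤ ((p : ℝ) ^ (d : ℝ)) ^ (d : ℝ)⁻¹ :=
        Real.rpow_le_rpow (by positivity) hα (by positivity)
    _ = p := Real.rpow_rpow_inv (by positivity) (by positivity)

lemma rpow_inv_le_shannonCapacity [NeZero p] {d : ℕ} (hd : 0 < d) :
    (indepNum (cyclePow p d) : ℝ) ^ (d : ℝ)⁻¹ ≤ shannonCapacity p := by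
  refine le_ciSup (f := fun d : {n : ℕ // 0 < n} => (indepNum (cyclePow p d) : ℝ) ^ ((d : ℕ) : ℝ)⁻¹)
    ⟨p, ?_⟩ ⟨d, hd⟩
  rintro _ ⟨d, rfl⟩
  exact indepNum_cyclePow_rpow_inv_le d.2

lemma ne_and_not_adj_of_one_lt_circDist {d : ℕ} {u v : Fin d → ZMod p} (i : Fin d)
    (h : 1 < circDist p (u i) (v i)) : u ≠ v ∧ ¬ (cyclePow p d).Adj u v := by
  refine ⟨?_, fun hadj => h.not_ge (hadj.2 i)⟩
  rintro rfl
  simp [circDist] at h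

end CyclePow

def FarApart (p a b : ℕ) : Prop :=
  a < p ∧ b < p ∧ 2 ≤ min (Nat.dist a b) (p - Nat.dist a b)

instance (p : ℕ) : DecidableRel (FarApart p) := fun a b =>
  inferInstanceAs (Decidable (a < p ∧ b < p ∧ _))

lemma FarApart.one_lt_circDist {p a b : ℕ} (h : FarApart p a b) :
    1 < circDist p (a : ZMod p) (b : ZMod p) := by
  obtain ⟨ha, hb, hab⟩ := h
  have hdist : ((a : ℤ) - b).natAbs = Nat.dist a b := by unfold Nat.dist; omega
  rw [circDist, ZMod.val_natCast_of_lt ha, ZMod.val_natCast_of_lt hb, hdist]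
  omega

def ofTriple (p : ℕ) (x : ℕ × ℕ × ℕ) : Fin 3 → ZMod p :=
  ![(x.1 : ZMod p), (x.2.1 : ZMod p), (x.2.2 : ZMod p)]

def SeparatedTriples (p : ℕ) (x y : ℕ × ℕ × ℕ) : Prop :=
  FarApart p x.1 y.1 ∨ FarApart p x.2.1 y.2.1 ∨ FarApart p x.2.2 y.2.2

instance (p : ℕ) : DecidableRel (SeparatedTriples p) := fun _ _ =>
  inferInstanceAs (Decidable (_ ∨ _ ∨ _))

lemma SeparatedTriples.ne_and_not_adj {p : ℕ} {x y : ℕ × ℕ × ℕ} (h : SeparatedTriples p x y) :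
    ofTriple p x ≠ ofTriple p y ∧ ¬ (cyclePow p 3).Adj (ofTriple p x) (ofTriple p y) := by
  rcases h with h | h | h
  · exact ne_and_not_adj_of_one_lt_circDist 0 h.one_lt_circDist
  · exact ne_and_not_adj_of_one_lt_circDist 1 h.one_lt_circDist
  · exact ne_and_not_adj_of_one_lt_circDist 2 h.one_lt_circDist

/-- Found by computer search; these are the points of the independent set with first
coordinate below `5`. -/
def c15OrbitReps : List (ℕ × ℕ × ℕ) := [
  (0, 0, 3), (0, 1, 10), (0, 1, 14), (0, 2, 4), (0, 3, 0), (0, 3, 10), (0, 4, 4), (0, 4, 6),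
  (0, 5, 0), (0, 5, 11), (0, 6, 5), (0, 6, 7), (0, 7, 1), (0, 7, 12), (0, 8, 5), (0, 8, 7),
  (0, 9, 1), (0, 9, 12), (0, 10, 8), (0, 11, 2), (0, 12, 9), (0, 12, 13), (0, 13, 3), (0, 14, 9),
  (0, 14, 13), (1, 0, 1), (1, 1, 8), (1, 1, 12), (1, 2, 2), (1, 3, 8), (1, 3, 13), (1, 4, 2),
  (1, 5, 13), (1, 6, 3), (1, 6, 9), (1, 7, 14), (1, 8, 3), (1, 8, 10), (1, 9, 14), (1, 10, 4),
  (1, 10, 6), (1, 10, 10), (1, 11, 0), (1, 12, 5), (1, 12, 7), (1, 12, 11), (1, 13, 1), (1, 14, 5),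
  (1, 14, 7), (1, 14, 11), (2, 0, 14), (2, 1, 4), (2, 1, 6), (2, 1, 10), (2, 2, 0), (2, 3, 4),
  (2, 3, 11), (2, 4, 0), (2, 4, 6), (2, 5, 11), (2, 6, 1), (2, 6, 5), (2, 6, 7), (2, 7, 12),
  (2, 8, 1), (2, 8, 6), (2, 8, 8), (2, 9, 12), (2, 10, 2), (2, 10, 8), (2, 11, 13), (2, 12, 3),
  (2, 12, 9), (2, 13, 14), (2, 14, 3), (2, 14, 9), (3, 0, 1), (3, 0, 12), (3, 1, 8), (3, 2, 2),
  (3, 2, 13), (3, 3, 9), (3, 4, 2), (3, 4, 13), (3, 5, 9), (3, 6, 3), (3, 6, 14), (3, 7, 10),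
  (3, 8, 4), (3, 8, 14), (3, 9, 10), (3, 10, 0), (3, 10, 4), (3, 10, 6), (3, 11, 11), (3, 12, 1),
  (3, 12, 5), (3, 12, 7), (3, 13, 12), (3, 14, 5), (3, 14, 7), (4, 0, 10), (4, 0, 14), (4, 1, 4),
  (4, 1, 6), (4, 2, 0), (4, 2, 11), (4, 3, 5), (4, 3, 7), (4, 4, 0), (4, 4, 11), (4, 5, 5),
  (4, 5, 7), (4, 6, 1), (4, 6, 12), (4, 7, 6), (4, 7, 8), (4, 8, 2), (4, 8, 12), (4, 9, 8),
  (4, 10, 2), (4, 10, 13), (4, 11, 9), (4, 12, 3), (4, 12, 14), (4, 13, 10), (4, 14, 3)]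

def shiftC15 (x : ℕ × ℕ × ℕ) : ℕ × ℕ × ℕ :=
  ((x.1 + 5) % 15, (x.2.1 + 5) % 15, x.2.2)

def c15IndepTriples : List (ℕ × ℕ × ℕ) :=
  c15OrbitReps.flatMap fun x => [x, shiftC15 x, shiftC15 (shiftC15 x)]

lemma c15IndepTriples_length : c15IndepTriples.length = 381 := by
  decide +kernel

lemma c15IndepTriples_pairwise : c15IndepTriples.Pairwise (SeparatedTriples 15) := by
  decide +kernel

lemma le_indepNum_cyclePow_15_3 : 381 ≤ indepNum (cyclePow 15 3) := by
  have h := le_indepNum_of_pairwise (cyclePow 15 3)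
    (List.pairwise_map.2 (c15IndepTriples_pairwise.imp SeparatedTriples.ne_and_not_adj))
  rwa [List.length_map, c15IndepTriples_length] at h

theorem shannon_capacity_C15_gt :
    (indepNum (cyclePow 15 3) : ℝ) ^ ((3 : ℝ))⁻¹ ≥ ((381 : ℝ)) ^ ((3 : ℝ))⁻¹ ∧
    ((381 : ℝ)) ^ ((3 : ℝ))⁻¹ > 7.2495 ∧
    shannonCapacity 15 > 7.2495 := by
  have hα : (381 : ℝ) ≤ indepNum (cyclePow 15 3) := by exact_mod_cast le_indepNum_cyclePow_15_3
  have h381 : (381 : ℝ) ^ (3 : ℝ)⁻¹ ≤ (indepNum (cyclePow 15 3) : ℝ) ^ (3 : ℝ)⁻¹ :=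
    Real.rpow_le_rpow (by norm_num) hα (by norm_num)
  have hcube : (7.2495 : ℝ) < 381 ^ (3 : ℝ)⁻¹ :=
    (Real.lt_rpow_inv_iff_of_pos (by norm_num) (by norm_num) (by norm_num)).2 (by norm_num)
  have hcap : (indepNum (cyclePow 15 3) : ℝ) ^ (3 : ℝ)⁻¹ ≤ shannonCapacity 15 := by
    exact_mod_cast rpow_inv_le_shannonCapacity (p := 15) (d := 3) (by norm_num)
  exact ⟨h381, hcube, hcube.trans_le (h381.trans hcap)⟩
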